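/- Let 0 < ε ≤ 1, let k ≥ 2, and let X ⊆ ℝ^d be finite and (k,ε)-irreducible, with optimal k-means partition X₁,…,X_k. Then for all 1 ≤ i < j ≤ k, ‖μ_i − μ_j‖² ≥ ε·(r_i + r_j). -/

import Mathlib

open Finset
open scoped BigOperators
open Classical

noncomputable section

/-- Points of `ℝ^d`. -/
abbrev Pt (d : ℕ) := EuclideanSpace ℝ (Fin d)

/-- `Φ(C, X) = Σ_{x ∈ X} min_{c ∈ C} ‖x - c‖²`. -/
noncomputable def Phi {d : ℕ} (C X : Finset (Pt d)) : ℝ :=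
  ∑ x ∈ X, sInf ((fun c => ‖x - c‖ ^ 2) '' (C : Set (Pt d)))

/-- The centroid `μ(X)` of a finite set of points. -/
noncomputable def ctr {d : ℕ} (X : Finset (Pt d)) : Pt d :=
  (X.card : ℝ)⁻¹ • ∑ x ∈ X, x

/-- `Δ₁(X) = Φ({μ(X)}, X)`. -/
noncomputable def Delta1 {d : ℕ} (X : Finset (Pt d)) : ℝ := Phi {ctr X} X

/-- `Δ_k(X)`: the optimal `k`-means cost of `X`. -/
noncomputable def DeltaK {d : ℕ} (k : ℕ) (X : Finset (Pt d)) : ℝ :=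
  sInf ((fun C => Phi C X) '' {C : Finset (Pt d) | C.card = k})

/-- `X₁, …, X_k` is an optimal `k`-means partition of `X`. -/
def IsOptPartition {d : ℕ} (k : ℕ) (X : Finset (Pt d)) (Xs : Fin k → Finset (Pt d)) : Prop :=
  (∀ j, (Xs j).Nonempty) ∧
  (∀ j l, j ≠ l → Disjoint (Xs j) (Xs l)) ∧
  Finset.univ.biUnion Xs = X ∧
  ∑ j, Delta1 (Xs j) = DeltaK k X

/-- `X` is `(k, ε)`-irreducible: `Δ_{k-1}(X) ≥ (1+ε)·Δ_k(X)`. -/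
def KIrreducible {d : ℕ} (k : ℕ) (ε : ℝ) (X : Finset (Pt d)) : Prop :=
  (1 + ε) * DeltaK k X ≤ DeltaK (k - 1) X

/-- The invariant `P(i)`: `Ci` consists of the centers `c r` for `r < i` (clusters reindexed
so that the covered clusters come first), each `c r` is a `(1 + ε/16)`-good center for the
optimal cluster `Xs r`, and `Φ(Ci, X) > 0`. -/
def InvariantP {d k : ℕ} (ε : ℝ) (X : Finset (Pt d)) (Xs : Fin k → Finset (Pt d))
    (i : ℕ) (c : Fin k → Pt d) (Ci : Finset (Pt d)) : Prop :=
  Ci = Finset.image c (Finset.univ.filter (fun r : Fin k => r.val < i)) ∧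
  (∀ r : Fin k, r.val < i → Phi {c r} (Xs r) ≤ (1 + ε / 16) * Delta1 (Xs r)) ∧
  0 < Phi Ci X

/-! Merging cluster `X_j` into the centroid `μ_i` leaves `k - 1` centers and, by the
parallel-axis identity `Φ({c}, Y) = Δ₁(Y) + |Y|·‖μ(Y) - c‖²`, costs at most
`Δ_k(X) + m_j‖μ_i - μ_j‖²`. Irreducibility then gives `ε·Δ_k(X) ≤ m_j‖μ_i - μ_j‖²`, and
`Δ₁(X_i) + Δ₁(X_j) ≤ Δ_k(X)`; dividing by `m_j` with `m_j ≤ m_i` gives the bound. -/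

section KMeans

variable {d : ℕ}

lemma phi_singleton (c : Pt d) (Y : Finset (Pt d)) : Phi {c} Y = ∑ x ∈ Y, ‖x - c‖ ^ 2 := by
  simp [Phi]

lemma bddBelow_sqDist_image (x : Pt d) (C : Set (Pt d)) :
    BddBelow ((fun c => ‖x - c‖ ^ 2) '' C) :=
  ⟨0, by rintro _ ⟨c, -, rfl⟩; positivity⟩

lemma phi_nonneg (C X : Finset (Pt d)) : 0 ≤ Phi C X :=
  Finset.sum_nonneg fun x _ => Real.sInf_nonneg (by rintro _ ⟨c, -, rfl⟩; positivity)

lemma phi_le_phi_of_subset {C C' : Finset (Pt d)} (X : Finset (Pt d)) (hC : C.Nonempty)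
    (hCC' : C ⊆ C') : Phi C' X ≤ Phi C X :=
  Finset.sum_le_sum fun x _ => csInf_le_csInf (bddBelow_sqDist_image x _)
    (hC.to_set.image _) (Set.image_mono (by exact_mod_cast hCC'))

lemma phi_le_phi_singleton {C : Finset (Pt d)} {c : Pt d} (hc : c ∈ C) (X : Finset (Pt d)) :
    Phi C X ≤ Phi {c} X := by
  rw [phi_singleton]
  exact Finset.sum_le_sum fun x _ => csInf_le (bddBelow_sqDist_image x _) ⟨c, hc, rfl⟩

lemma sum_sub_ctr {Y : Finset (Pt d)} (hY : Y.Nonempty) : ∑ x ∈ Y, (x - ctr Y) = 0 := by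
  have hcard : (Y.card : ℝ) ≠ 0 := by exact_mod_cast hY.card_pos.ne'
  rw [Finset.sum_sub_distrib, Finset.sum_const, ctr, ← Nat.cast_smul_eq_nsmul ℝ, smul_smul,
    mul_inv_cancel₀ hcard, one_smul, sub_self]

lemma phi_singleton_eq_delta1_add {Y : Finset (Pt d)} (hY : Y.Nonempty) (c : Pt d) :
    Phi {c} Y = Delta1 Y + Y.card * ‖ctr Y - c‖ ^ 2 := by
  have expand (x : Pt d) : ‖x - c‖ ^ 2 =
      ‖x - ctr Y‖ ^ 2 + 2 * inner ℝ (x - ctr Y) (ctr Y - c) + ‖ctr Y - c‖ ^ 2 := by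
    rw [← norm_add_sq_real, sub_add_sub_cancel]
  rw [Delta1, phi_singleton, phi_singleton, Finset.sum_congr rfl fun x _ => expand x,
    Finset.sum_add_distrib, Finset.sum_add_distrib, ← Finset.mul_sum, ← sum_inner,
    sum_sub_ctr hY, inner_zero_left, mul_zero, add_zero, Finset.sum_const, nsmul_eq_mul]

lemma deltaK_le_phi {n : ℕ} {C : Finset (Pt d)} (X : Finset (Pt d)) (hC : C.card = n) :
    DeltaK n X ≤ Phi C X :=
  csInf_le ⟨0, by rintro _ ⟨C', -, rfl⟩; exact phi_nonneg _ _⟩ ⟨C, hC, rfl⟩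

lemma deltaK_le_phi_of_card_le [Infinite (Pt d)] {n : ℕ} {C : Finset (Pt d)}
    (X : Finset (Pt d)) (hC : C.Nonempty) (hCn : C.card ≤ n) : DeltaK n X ≤ Phi C X := by
  obtain ⟨C', hCC', hC'n⟩ := Infinite.exists_superset_card_eq C n hCn
  exact (deltaK_le_phi X hC'n).trans (phi_le_phi_of_subset X hC hCC')

namespace IsOptPartition

variable {k : ℕ} {X : Finset (Pt d)} {Xs : Fin k → Finset (Pt d)}

lemma infinite_pt (hopt : IsOptPartition k X Xs) {i j : Fin k} (hij : i ≠ j) :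
    Infinite (Pt d) := by
  obtain ⟨x, hx⟩ := hopt.1 i
  obtain ⟨y, hy⟩ := hopt.1 j
  have : Nontrivial (Pt d) :=
    nontrivial_of_ne x y fun hxy => Finset.disjoint_left.mp (hopt.2.1 i j hij) hx (hxy ▸ hy)
  exact Module.Free.infinite ℝ (Pt d)

lemma delta1_add_delta1_le (hopt : IsOptPartition k X Xs) {i j : Fin k} (hij : i ≠ j) :
    Delta1 (Xs i) + Delta1 (Xs j) ≤ DeltaK k X := by
  rw [← hopt.2.2.2, ← Finset.sum_pair (f := fun r => Delta1 (Xs r)) hij]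
  exact Finset.sum_le_sum_of_subset_of_nonneg (Finset.subset_univ _)
    fun r _ _ => phi_nonneg _ _

lemma deltaK_pred_le (hopt : IsOptPartition k X Xs) {i j : Fin k} (hij : i ≠ j) :
    DeltaK (k - 1) X ≤ DeltaK k X + (Xs j).card * ‖ctr (Xs j) - ctr (Xs i)‖ ^ 2 := by
  have := hopt.infinite_pt hij
  obtain ⟨hne, hdisj, hunion, hsum⟩ := hopt
  set C := (Finset.univ.erase j).image fun r => ctr (Xs r)
  have mem_C {r : Fin k} (hr : r ≠ j) : ctr (Xs r) ∈ C :=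
    Finset.mem_image_of_mem _ (Finset.mem_erase.mpr ⟨hr, Finset.mem_univ r⟩)
  have hCcard : C.card ≤ k - 1 :=
    Finset.card_image_le.trans (by simp [Finset.card_erase_of_mem])
  have cost_j : Phi C (Xs j) ≤ Delta1 (Xs j) + (Xs j).card * ‖ctr (Xs j) - ctr (Xs i)‖ ^ 2 :=
    (phi_le_phi_singleton (mem_C hij) _).trans (phi_singleton_eq_delta1_add (hne j) _).le
  have cost_ne : ∀ r ∈ Finset.univ.erase j, Phi C (Xs r) ≤ Delta1 (Xs r) :=
    fun r hr => phi_le_phi_singleton (mem_C (Finset.ne_of_mem_erase hr)) _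
  calc DeltaK (k - 1) X ≤ Phi C X := deltaK_le_phi_of_card_le X ⟨_, mem_C hij⟩ hCcard
    _ = Phi C (Xs j) + ∑ r ∈ Finset.univ.erase j, Phi C (Xs r) := by
      rw [Finset.add_sum_erase _ (fun r => Phi C (Xs r)) (Finset.mem_univ j), ← hunion]
      exact Finset.sum_biUnion fun a _ b _ hab => hdisj a b hab
    _ ≤ Delta1 (Xs j) + (Xs j).card * ‖ctr (Xs j) - ctr (Xs i)‖ ^ 2 +
        ∑ r ∈ Finset.univ.erase j, Delta1 (Xs r) :=
      add_le_add cost_j (Finset.sum_le_sum cost_ne)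
    _ = DeltaK k X + (Xs j).card * ‖ctr (Xs j) - ctr (Xs i)‖ ^ 2 := by
      rw [← hsum, ← Finset.add_sum_erase _ (fun r => Delta1 (Xs r)) (Finset.mem_univ j)]
      ring

lemma eps_mul_le_of_card_le {ε : ℝ} (hε : 0 < ε) (hirr : KIrreducible k ε X)
    (hopt : IsOptPartition k X Xs) {i j : Fin k} (hij : i ≠ j)
    (hcard : (Xs j).card ≤ (Xs i).card) :
    ε * (Delta1 (Xs i) / (Xs i).card + Delta1 (Xs j) / (Xs j).card) ≤
      ‖ctr (Xs i) - ctr (Xs j)‖ ^ 2 := by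
  have hmj : (0 : ℝ) < (Xs j).card := by exact_mod_cast (hopt.1 j).card_pos
  have hmji : ((Xs j).card : ℝ) ≤ (Xs i).card := by exact_mod_cast hcard
  have merge : ε * DeltaK k X ≤ (Xs j).card * ‖ctr (Xs i) - ctr (Xs j)‖ ^ 2 := by
    have := hopt.deltaK_pred_le hij
    rw [norm_sub_rev] at this
    unfold KIrreducible at hirr
    linarith
  have pair := hopt.delta1_add_delta1_le hij
  calc ε * (Delta1 (Xs i) / (Xs i).card + Delta1 (Xs j) / (Xs j).card)
      ≤ ε * ((Delta1 (Xs i) + Delta1 (Xs j)) / (Xs j).card) := by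
        rw [add_div]
        gcongr
        exact phi_nonneg _ _
    _ ≤ ε * DeltaK k X / (Xs j).card := by
        rw [mul_div_assoc]
        gcongr
    _ ≤ ‖ctr (Xs i) - ctr (Xs j)‖ ^ 2 := by
        rw [div_le_iff₀ hmj]
        linarith

end IsOptPartition

end KMeans

theorem stmt_6_general {d k : ℕ} (ε : ℝ) (hε0 : 0 < ε)
    (X : Finset (Pt d)) (hirr : KIrreducible k ε X)
    (Xs : Fin k → Finset (Pt d)) (hopt : IsOptPartition k X Xs) :
    ∀ i j : Fin k, i ≠ j →
      ε * (Delta1 (Xs i) / ((Xs i).card : ℝ) + Delta1 (Xs j) / ((Xs j).card : ℝ)) ≤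
        ‖ctr (Xs i) - ctr (Xs j)‖ ^ 2 := by
  intro i j hij
  rcases le_total (Xs j).card (Xs i).card with hji | hij_card
  · exact hopt.eps_mul_le_of_card_le hε0 hirr hij hji
  · rw [add_comm, norm_sub_rev]
    exact hopt.eps_mul_le_of_card_le hε0 hirr hij.symm hij_card

/-- If `0 < ε ≤ 1`, `k ≥ 2` and `X` is `(k, ε)`-irreducible with optimal
`k`-means partition `X₁, …, X_k`, then for all `i ≠ j`,
`‖μ_i − μ_j‖² ≥ ε·(r_i + r_j)` where `r_i = Δ₁(X_i)/|X_i|`. -/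
theorem stmt_6 {d k : ℕ} (hk : 2 ≤ k) (ε : ℝ) (hε0 : 0 < ε) (hε1 : ε ≤ 1)
    (X : Finset (Pt d)) (hirr : KIrreducible k ε X)
    (Xs : Fin k → Finset (Pt d)) (hopt : IsOptPartition k X Xs) :
    ∀ i j : Fin k, i ≠ j →
      ε * (Delta1 (Xs i) / ((Xs i).card : ℝ) + Delta1 (Xs j) / ((Xs j).card : ℝ)) ≤
        ‖ctr (Xs i) - ctr (Xs j)‖ ^ 2 :=
  stmt_6_general ε hε0 X hirr Xs hopt
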